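/- arXiv:2105.12664 — 2 statements merged into one kernel-verified Lean document; each statement's English description precedes it below -/
import Mathlib

section
/- Let A be a 5-by-5 reciprocal matrix. Then for all θ, λ ∈ ℝ, writing ρ = cos²θ: det(Re(e^{iθ}A) − λI₅) = −λ·[λ⁴ − (ξ₁ + ξ₂ + ξ₃ + ξ₄ + 4ρ)λ² + (ξ₁ + ρ)(ξ₃ + ρ) + (ξ₁ + ρ)(ξ₄ + ρ) + (ξ₂ + ρ)(ξ₄ + ρ)]. -/
open Matrix Polynomial

/-- A tridiagonal complex matrix with zero main diagonal whose symmetric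
off-diagonal entries have pairwise products equal to one. -/
def IsReciprocal {n : ℕ} (A : Matrix (Fin n) (Fin n) ℂ) : Prop :=
  (∀ i j : Fin n, ((i : ℤ) - (j : ℤ)) ^ 2 ≠ 1 → A i j = 0) ∧
  ∀ i j : Fin n, (j : ℕ) = (i : ℕ) + 1 → A i j * A j i = 1

/-- The Hermitian matrix `Re (e^{iθ} A) = (e^{iθ}A + (e^{iθ}A)*)/2`. -/
noncomputable def RePart {n : ℕ} (θ : ℝ) (A : Matrix (Fin n) (Fin n) ℂ) :
    Matrix (Fin n) (Fin n) ℂ :=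
  (2 : ℂ)⁻¹ • (Complex.exp (θ * Complex.I) • A + (Complex.exp (θ * Complex.I) • A)ᴴ)

/-!
`Re (e^{iθ} A)` is again tridiagonal with zero diagonal, so its characteristic polynomial is a
5-by-5 continuant depending only on the products `p_j` of its symmetric off-diagonal entries.
For such a pair `a = A j (j+1)`, `c = A (j+1) j` with `a c = 1` and `z = e^{iθ}` on the unit circle,
`p_j = (z a + z̄ c̄)(z c + z̄ ā)/4 = (|a|² + |c|² + z² + z̄²)/4 = (|a| - |c|)²/4 + (Re z)² = ξ_j + cos² θ`.
-/

open ComplexConjugate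

theorem det_sub_smul_one_of_hollow_tridiagonal {R : Type*} [CommRing R]
    (M : Matrix (Fin 5) (Fin 5) R) (hM : ∀ i j : Fin 5, ((i : ℤ) - (j : ℤ)) ^ 2 ≠ 1 → M i j = 0)
    (l : R) :
    (M - l • 1).det =
      -l * (l ^ 4 - (M 0 1 * M 1 0 + M 1 2 * M 2 1 + M 2 3 * M 3 2 + M 3 4 * M 4 3) * l ^ 2
        + M 0 1 * M 1 0 * (M 2 3 * M 3 2) + M 0 1 * M 1 0 * (M 3 4 * M 4 3)
        + M 1 2 * M 2 1 * (M 3 4 * M 4 3)) := by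
  have h_entries : M - l • 1 = !![-l, M 0 1, 0, 0, 0; M 1 0, -l, M 1 2, 0, 0; 0, M 2 1, -l, M 2 3, 0;
      0, 0, M 3 2, -l, M 3 4; 0, 0, 0, M 4 3, -l] := by
    ext i j
    fin_cases i <;> fin_cases j <;> simp <;> exact hM _ _ (by decide)
  rw [h_entries]
  simp [det_succ_row_zero, Fin.sum_univ_succ, Fin.succAbove]
  ring

theorem half_add_conj_mul_half_add_conj {z a c : ℂ} (hz : ‖z‖ = 1) (h : a * c = 1) :
    2⁻¹ * (z * a + conj z * conj c) * (2⁻¹ * (z * c + conj z * conj a)) =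
      (((‖a‖ - ‖c‖) ^ 2 / 4 + z.re ^ 2 : ℝ) : ℂ) := by
  have hz_conj : conj z * z = 1 := by rw [Complex.conj_mul', hz]; norm_num
  have hre : z + conj z = 2 * z.re := by rw [Complex.add_conj]; push_cast; rfl
  have ha : conj a * a = (‖a‖ : ℂ) ^ 2 := Complex.conj_mul' a
  have hc : conj c * c = (‖c‖ : ℂ) ^ 2 := Complex.conj_mul' c
  have hconj : conj a * conj c = 1 := by rw [← map_mul, h, map_one]
  have hnorm : (‖a‖ : ℂ) * ‖c‖ = 1 := by
    exact_mod_cast (norm_mul a c).symm.trans (by rw [h, norm_one])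
  push_cast
  linear_combination (z ^ 2 / 4) * h + (conj z ^ 2 / 4) * hconj + (conj z * z / 4) * (ha + hc)
    + (((‖a‖ : ℂ) ^ 2 + ‖c‖ ^ 2) / 4 - 1 / 2) * hz_conj + hnorm / 2
    + ((z + conj z) / 2 + z.re) / 2 * hre

theorem RePart_apply {n : ℕ} (θ : ℝ) (A : Matrix (Fin n) (Fin n) ℂ) (i j : Fin n) :
    RePart θ A i j = 2⁻¹ * (Complex.exp (θ * Complex.I) * A i j
      + conj (Complex.exp (θ * Complex.I)) * conj (A j i)) := by
  simp [RePart, conjTranspose_apply]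

namespace IsReciprocal

variable {n : ℕ} {A : Matrix (Fin n) (Fin n) ℂ}

theorem rePart_apply_eq_zero (hA : IsReciprocal A) (θ : ℝ) {i j : Fin n}
    (hij : ((i : ℤ) - (j : ℤ)) ^ 2 ≠ 1) : RePart θ A i j = 0 := by
  have hji : ((j : ℤ) - (i : ℤ)) ^ 2 ≠ 1 := by rwa [← neg_sub, neg_sq]
  simp [RePart_apply, hA.1 i j hij, hA.1 j i hji]

theorem rePart_mul_rePart (hA : IsReciprocal A) (θ : ℝ) (i j : Fin n)
    (hij : (j : ℕ) = (i : ℕ) + 1) :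
    RePart θ A i j * RePart θ A j i =
      (((‖A i j‖ - ‖A j i‖) ^ 2 / 4 + Real.cos θ ^ 2 : ℝ) : ℂ) := by
  rw [RePart_apply, RePart_apply, half_add_conj_mul_half_add_conj
    (Complex.norm_exp_ofReal_mul_I θ) (hA.2 i j hij), Complex.exp_ofReal_mul_I_re]

end IsReciprocal

/-- Kippenhahn polynomial of a 5-by-5 reciprocal matrix. -/
theorem kippenhahn_poly_five (A : Matrix (Fin 5) (Fin 5) ℂ) (hA : IsReciprocal A)
    (ξ₁ ξ₂ ξ₃ ξ₄ : ℝ)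
    (h1 : ξ₁ = (‖A 0 1‖ - ‖A 1 0‖) ^ 2 / 4)
    (h2 : ξ₂ = (‖A 1 2‖ - ‖A 2 1‖) ^ 2 / 4)
    (h3 : ξ₃ = (‖A 2 3‖ - ‖A 3 2‖) ^ 2 / 4)
    (h4 : ξ₄ = (‖A 3 4‖ - ‖A 4 3‖) ^ 2 / 4) :
    ∀ θ lam : ℝ,
      (RePart θ A - (lam : ℂ) • 1).det =
        ((-lam * (lam ^ 4 - (ξ₁ + ξ₂ + ξ₃ + ξ₄ + 4 * Real.cos θ ^ 2) * lam ^ 2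
            + (ξ₁ + Real.cos θ ^ 2) * (ξ₃ + Real.cos θ ^ 2)
            + (ξ₁ + Real.cos θ ^ 2) * (ξ₄ + Real.cos θ ^ 2)
            + (ξ₂ + Real.cos θ ^ 2) * (ξ₄ + Real.cos θ ^ 2)) : ℝ) : ℂ) := by
  intro θ lam
  rw [det_sub_smul_one_of_hollow_tridiagonal _ (fun _ _ ↦ hA.rePart_apply_eq_zero θ),
    hA.rePart_mul_rePart θ 0 1 rfl, hA.rePart_mul_rePart θ 1 2 rfl,
    hA.rePart_mul_rePart θ 2 3 rfl, hA.rePart_mul_rePart θ 3 4 rfl, ← h1, ← h2, ← h3, ← h4]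
  push_cast
  ring
end

section
/- Let A be a 6-by-6 reciprocal matrix. Then for all θ, λ ∈ ℝ, writing ρ = cos²θ: det(Re(e^{iθ}A) − λI₆) = λ⁶ − (ξ₁ + ξ₂ + ξ₃ + ξ₄ + ξ₅ + 5ρ)λ⁴ + [ (ξ₁ξ₃ + ξ₁ξ₄ + ξ₁ξ₅ + ξ₂ξ₄ + ξ₂ξ₅ + ξ₃ξ₅) + (3(ξ₁ + ξ₅) + 2(ξ₂ + ξ₃ + ξ₄))ρ + 6ρ² ]λ² − (ξ₁ + ρ)(ξ₃ + ρ)(ξ₅ + ρ). -/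
/-!
Because `A` is tridiagonal with zero diagonal, so is `Re (e^{iθ} A)`, and the determinant of a
tridiagonal matrix with constant diagonal `-λ` depends only on `λ` and the products `b_j c_j` of
opposite off-diagonal entries. For a reciprocal pair `a b = 1` and `ω = e^{iθ}` this product is
`(ω² + ω̄² + |a|² + |b|²) / 4`; with `ω² + ω̄² = 4 cos² θ - 2` and `|a|² + |b|² = (|a| - |b|)² + 2`
(as `|a| |b| = 1`) it equals `ξ_j + cos² θ`.
-/

open Matrix Polynomial

theorem det_sub_smul_one_fin_six_of_tridiagonal {R : Type*} [CommRing R]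
    {M : Matrix (Fin 6) (Fin 6) R} (hM : ∀ i j : Fin 6, ((i : ℤ) - (j : ℤ)) ^ 2 ≠ 1 → M i j = 0)
    (d : R) {p₁ p₂ p₃ p₄ p₅ : R}
    (hp₁ : M 0 1 * M 1 0 = p₁) (hp₂ : M 1 2 * M 2 1 = p₂) (hp₃ : M 2 3 * M 3 2 = p₃)
    (hp₄ : M 3 4 * M 4 3 = p₄) (hp₅ : M 4 5 * M 5 4 = p₅) :
    (M - d • 1).det = d ^ 6 - (p₁ + p₂ + p₃ + p₄ + p₅) * d ^ 4
      + (p₁ * p₃ + p₁ * p₄ + p₁ * p₅ + p₂ * p₄ + p₂ * p₅ + p₃ * p₅) * d ^ 2 - p₁ * p₃ * p₅ := by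
  have hM' : M - d • 1 = Matrix.of ![![-d, M 0 1, 0, 0, 0, 0], ![M 1 0, -d, M 1 2, 0, 0, 0],
      ![0, M 2 1, -d, M 2 3, 0, 0], ![0, 0, M 3 2, -d, M 3 4, 0],
      ![0, 0, 0, M 4 3, -d, M 4 5], ![0, 0, 0, 0, M 5 4, -d]] := by
    ext i j
    fin_cases i <;> fin_cases j <;> simp [one_apply] <;> exact hM _ _ (by decide)
  rw [hM']
  subst hp₁ hp₂ hp₃ hp₄ hp₅
  simp only [Nat.succ_eq_add_one, Nat.reduceAdd, Fin.isValue, det_succ_row_zero, of_apply,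
    cons_val', cons_val_fin_one, cons_val_zero, submatrix_apply, Fin.succ_zero_eq_one,
    Fin.succAbove, cons_val_one, submatrix_submatrix, Function.comp_apply, Fin.succ_one_eq_two,
    cons_val, Fin.reduceSucc, det_unique, Fin.default_eq_zero, Fin.castSucc_zero, Fin.sum_univ_succ,
    Fin.coe_ofNat_eq_mod, Nat.zero_mod, pow_zero, one_mul, lt_self_iff_false, ↓reduceIte,
    Fin.castSucc_one, Finset.univ_unique, Fin.val_succ, Fin.val_eq_zero, zero_add, pow_one,
    Fin.castSucc_succ, neg_mul, Fin.succ_pos, Finset.sum_neg_distrib, Finset.sum_singleton,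
    not_lt_zero, Fin.reduceCastSucc, even_two, Even.neg_pow, one_pow, Fin.reduceLT, Fin.lt_one_iff,
    Fin.reduceEq, mul_neg, neg_neg, mul_zero, neg_zero, add_zero, zero_mul, cons_val_succ,
    Finset.sum_const_zero]
  ring

theorem rePart_apply {n : ℕ} (θ : ℝ) (A : Matrix (Fin n) (Fin n) ℂ) (i j : Fin n) :
    RePart θ A i j = (2 : ℂ)⁻¹ * (Complex.exp (θ * Complex.I) * A i j
      + starRingEnd ℂ (Complex.exp (θ * Complex.I) * A j i)) := by
  simp [RePart]

theorem IsReciprocal.rePart_apply_eq_zero_s5 {n : ℕ} {A : Matrix (Fin n) (Fin n) ℂ}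
    (hA : IsReciprocal A) (θ : ℝ) {i j : Fin n} (hij : ((i : ℤ) - (j : ℤ)) ^ 2 ≠ 1) :
    RePart θ A i j = 0 := by
  have hji : ((j : ℤ) - (i : ℤ)) ^ 2 ≠ 1 := by rwa [← neg_sub, neg_sq]
  simp [rePart_apply, hA.1 i j hij, hA.1 j i hji]

theorem rePart_apply_mul_rePart_apply {n : ℕ} (θ : ℝ) {A : Matrix (Fin n) (Fin n) ℂ}
    {i j : Fin n} (h : A i j * A j i = 1) :
    RePart θ A i j * RePart θ A j i =
      (((‖A i j‖ - ‖A j i‖) ^ 2 / 4 + Real.cos θ ^ 2 : ℝ) : ℂ) := by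
  simp only [rePart_apply, map_mul, Complex.ofReal_add, Complex.ofReal_div, Complex.ofReal_pow,
    Complex.ofReal_sub, Complex.ofReal_ofNat]
  set ω := Complex.exp (θ * Complex.I)
  have hω_add : ω + starRingEnd ℂ ω = 2 * Real.cos θ := by
    rw [Complex.add_conj, Complex.exp_ofReal_mul_I_re, Complex.ofReal_mul, Complex.ofReal_ofNat]
  have hω_mul : ω * starRingEnd ℂ ω = 1 := by
    rw [Complex.mul_conj', Complex.norm_exp_ofReal_mul_I, Complex.ofReal_one, one_pow]
  have h_conj : starRingEnd ℂ (A i j) * starRingEnd ℂ (A j i) = 1 := by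
    rw [← map_mul, h, map_one]
  have h_norm : (‖A i j‖ : ℂ) * ‖A j i‖ = 1 := by exact_mod_cast (by rw [← norm_mul, h, norm_one])
  linear_combination (ω ^ 2 / 4) * h + (starRingEnd ℂ ω ^ 2 / 4) * h_conj
    + ((A i j * starRingEnd ℂ (A i j) + A j i * starRingEnd ℂ (A j i) - 2) / 4) * hω_mul
    + (1 / 4) * Complex.mul_conj' (A i j) + (1 / 4) * Complex.mul_conj' (A j i)
    + ((ω + starRingEnd ℂ ω + 2 * Real.cos θ) / 4) * hω_add + (1 / 2) * h_norm

/-- Kippenhahn polynomial of a 6-by-6 reciprocal matrix. -/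
theorem kippenhahn_poly_six (A : Matrix (Fin 6) (Fin 6) ℂ) (hA : IsReciprocal A)
    (ξ₁ ξ₂ ξ₃ ξ₄ ξ₅ : ℝ)
    (h1 : ξ₁ = (‖A 0 1‖ - ‖A 1 0‖) ^ 2 / 4)
    (h2 : ξ₂ = (‖A 1 2‖ - ‖A 2 1‖) ^ 2 / 4)
    (h3 : ξ₃ = (‖A 2 3‖ - ‖A 3 2‖) ^ 2 / 4)
    (h4 : ξ₄ = (‖A 3 4‖ - ‖A 4 3‖) ^ 2 / 4)
    (h5 : ξ₅ = (‖A 4 5‖ - ‖A 5 4‖) ^ 2 / 4) :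
    ∀ θ lam : ℝ,
      (RePart θ A - (lam : ℂ) • 1).det =
        ((lam ^ 6 - (ξ₁ + ξ₂ + ξ₃ + ξ₄ + ξ₅ + 5 * Real.cos θ ^ 2) * lam ^ 4
            + ((ξ₁ * ξ₃ + ξ₁ * ξ₄ + ξ₁ * ξ₅ + ξ₂ * ξ₄ + ξ₂ * ξ₅ + ξ₃ * ξ₅)
              + (3 * (ξ₁ + ξ₅) + 2 * (ξ₂ + ξ₃ + ξ₄)) * Real.cos θ ^ 2
              + 6 * Real.cos θ ^ 2 * Real.cos θ ^ 2) * lam ^ 2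
            - (ξ₁ + Real.cos θ ^ 2) * (ξ₃ + Real.cos θ ^ 2) * (ξ₅ + Real.cos θ ^ 2) : ℝ) : ℂ) := by
  intro θ lam
  have hdet := det_sub_smul_one_fin_six_of_tridiagonal
    (fun _ _ => hA.rePart_apply_eq_zero_s5 θ) (lam : ℂ)
    (rePart_apply_mul_rePart_apply θ (hA.2 0 1 rfl))
    (rePart_apply_mul_rePart_apply θ (hA.2 1 2 rfl))
    (rePart_apply_mul_rePart_apply θ (hA.2 2 3 rfl))
    (rePart_apply_mul_rePart_apply θ (hA.2 3 4 rfl))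
    (rePart_apply_mul_rePart_apply θ (hA.2 4 5 rfl))
  rw [hdet, ← h1, ← h2, ← h3, ← h4, ← h5]
  push_cast
  ring
end
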